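/- Let p₀ < p < ∞. There exists a constant C > 0 such that for every measurable kernel K : [1,∞) × (0,1/2] → ℂ satisfying |K(t,r)| ≤ e^{−ρt} t^{−1} r^{−(α+1/2)} for all t ≥ 1 and 0 < r ≤ 1/2, and every f ∈ L^p((0,∞),dμ), one has ( ∫₁^∞ | ∫₀^{1/2} K(t,r) f(r) Δ(r) dr |² Δ(t) dt )^{1/2} ≤ C ‖f‖_{L^p((0,∞),dμ)}. -/

import Mathlib

/-!
Near `0` the weight is `Δ(r) ≲ r^(2α+1)`, so `r^(-(α+1/2))` lies in `L^q(μ)` on `(0, 1/2]` exactly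
when `q < p₁`, i.e. when the conjugate exponent of `q` exceeds `p₀`. Hölder's inequality then bounds
the inner integral by `e^(-ρt) t⁻¹ ‖r^(-(α+1/2))‖_q ‖f‖_p`, and the square of this majorant is
`μ`-integrable on `[1, ∞)` because `Δ(t) ≲ e^(2ρt)`.
-/

open MeasureTheory Real Set

/-- The Jacobi weight `Δ(t) = (2 sinh t)^(2α+1) (2 cosh t)^(2β+1)`. -/
noncomputable def Δj (α β : ℝ) (t : ℝ) : ℝ :=
  (2 * Real.sinh t) ^ (2 * α + 1) * (2 * Real.cosh t) ^ (2 * β + 1)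

/-- The measure `dμ = Δ(t) dt`. -/
noncomputable def μj (α β : ℝ) : Measure ℝ :=
  MeasureTheory.volume.withDensity fun t => ENNReal.ofReal (Δj α β t)

open scoped ENNReal

theorem lintegral_enorm_integral_sq_le {X Y E : Type*} [MeasurableSpace X] [MeasurableSpace Y]
    [NormedAddCommGroup E] [NormedSpace ℝ E] {μ : Measure X} {ν : Measure Y}
    {K : X → Y → E} {a : X → ℝ} {g : Y → ℝ≥0∞} (ha : AEMeasurable a μ)
    (hK : ∀ᵐ t ∂μ, ∀ᵐ r ∂ν, ‖K t r‖ₑ ≤ ENNReal.ofReal (a t) * g r) :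
    ∫⁻ t, ‖∫ r, K t r ∂ν‖ₑ ^ 2 ∂μ ≤
      (∫⁻ t, ENNReal.ofReal (a t) ^ 2 ∂μ) * (∫⁻ r, g r ∂ν) ^ 2 := by
  have hpt : ∀ᵐ t ∂μ, ‖∫ r, K t r ∂ν‖ₑ ≤ ENNReal.ofReal (a t) * ∫⁻ r, g r ∂ν := by
    filter_upwards [hK] with t ht
    calc ‖∫ r, K t r ∂ν‖ₑ ≤ ∫⁻ r, ‖K t r‖ₑ ∂ν := enorm_integral_le_lintegral_enorm _
      _ ≤ ∫⁻ r, ENNReal.ofReal (a t) * g r ∂ν := lintegral_mono_ae ht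
      _ = ENNReal.ofReal (a t) * ∫⁻ r, g r ∂ν := lintegral_const_mul' _ _ ENNReal.ofReal_ne_top
  calc ∫⁻ t, ‖∫ r, K t r ∂ν‖ₑ ^ 2 ∂μ
      ≤ ∫⁻ t, ENNReal.ofReal (a t) ^ 2 * (∫⁻ r, g r ∂ν) ^ 2 ∂μ := by
        refine lintegral_mono_ae ?_
        filter_upwards [hpt] with t ht
        rw [← mul_pow]
        gcongr
    _ = (∫⁻ t, ENNReal.ofReal (a t) ^ 2 ∂μ) * (∫⁻ r, g r ∂ν) ^ 2 :=
        lintegral_mul_const'' _ (ha.ennreal_ofReal.pow_const 2)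

theorem Real.sinh_le_mul_exp (t : ℝ) : sinh t ≤ t * exp t := by
  have h := add_one_le_exp (-2 * t)
  have hsplit : exp (-t) = exp t * exp (-2 * t) := by rw [← exp_add]; ring_nf
  rw [sinh_eq, hsplit]
  nlinarith [exp_pos t]

theorem Real.sinh_le_exp (t : ℝ) : sinh t ≤ exp t := by
  rw [sinh_eq]
  linarith [exp_pos t, exp_pos (-t)]

theorem Real.cosh_le_exp {t : ℝ} (ht : 0 ≤ t) : cosh t ≤ exp t := by
  rw [cosh_eq]
  linarith [exp_le_exp.2 (show -t ≤ t by linarith)]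

section JacobiWeight

variable {α β : ℝ}

theorem measurable_Δj : Measurable (Δj α β) := by
  unfold Δj
  fun_prop

theorem Δj_pos {t : ℝ} (ht : 0 < t) : 0 < Δj α β t :=
  mul_pos (rpow_pos_of_pos (by linarith [sinh_pos_iff.2 ht]) _)
    (rpow_pos_of_pos (by linarith [cosh_pos t]) _)

theorem Δj_le_rpow_mul {s t : ℝ} (h2α : 0 ≤ 2 * α + 1) (h2β : 0 ≤ 2 * β + 1) (ht : 0 ≤ t)
    (hs : 0 ≤ s) (hsinh : sinh t ≤ s * exp t) :
    Δj α β t ≤ s ^ (2 * α + 1) * (2 ^ (2 * (α + β + 1)) * exp (2 * (α + β + 1) * t)) := by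
  have hsinh0 : 0 ≤ 2 * sinh t := by linarith [sinh_nonneg_iff.2 ht]
  calc Δj α β t ≤ (s * (2 * exp t)) ^ (2 * α + 1) * (2 * exp t) ^ (2 * β + 1) := by
        unfold Δj
        have hsinh' : 2 * sinh t ≤ s * (2 * exp t) := by linarith
        have hcosh : 2 * cosh t ≤ 2 * exp t := by linarith [cosh_le_exp ht]
        gcongr ?_ * ?_
        exacts [rpow_le_rpow hsinh0 hsinh' h2α, rpow_le_rpow (by positivity) hcosh h2β]
    _ = s ^ (2 * α + 1) * (2 ^ (2 * (α + β + 1)) * exp (2 * (α + β + 1) * t)) := by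
        rw [mul_rpow hs (by positivity), mul_assoc, ← rpow_add (by positivity),
          mul_rpow zero_le_two (exp_pos t).le, ← exp_mul]
        ring_nf

theorem lintegral_μj_restrict {s : Set ℝ} (hs : MeasurableSet s) (g : ℝ → ℝ≥0∞) :
    ∫⁻ r in s, g r ∂μj α β = ∫⁻ r in s, ENNReal.ofReal (Δj α β r) * g r := by
  rw [μj, restrict_withDensity hs, lintegral_withDensity_eq_lintegral_mul_non_measurable _
      measurable_Δj.ennreal_ofReal (ae_of_all _ fun _ => ENNReal.ofReal_lt_top)]
  rfl

theorem memLp_rpow_μj_Ioc {s q b : ℝ} (h2α : 0 ≤ 2 * α + 1) (h2β : 0 ≤ 2 * β + 1) (hq : 0 < q)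
    (hs : -1 < s * q + (2 * α + 1)) :
    MemLp (fun r : ℝ => r ^ s) (ENNReal.ofReal q) ((μj α β).restrict (Ioc 0 b)) := by
  set C : ℝ := 2 ^ (2 * (α + β + 1)) * exp (2 * (α + β + 1) * b)
  have hint : IntegrableOn (fun r : ℝ => C * r ^ (s * q + (2 * α + 1))) (Ioc 0 b) :=
    ((intervalIntegral.intervalIntegrable_rpow' hs).def'.mono_set Ioc_subset_uIoc).const_mul C
  refine ⟨(measurable_id.pow_const s).aestronglyMeasurable, ?_⟩
  rw [eLpNorm_eq_lintegral_rpow_enorm_toReal (by simpa using hq) ENNReal.ofReal_ne_top,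
    ENNReal.toReal_ofReal hq.le, lintegral_μj_restrict measurableSet_Ioc]
  refine ENNReal.rpow_lt_top_of_nonneg (by positivity) (ne_of_lt ?_)
  refine lt_of_le_of_lt (setLIntegral_mono' measurableSet_Ioc fun r hr => ?_)
    hint.lintegral_lt_top
  obtain ⟨hr0, hrb⟩ := hr
  have hΔ : Δj α β r ≤ r ^ (2 * α + 1) * C :=
    (Δj_le_rpow_mul h2α h2β hr0.le hr0.le (sinh_le_mul_exp r)).trans
      (mul_le_mul_of_nonneg_left
        (mul_le_mul_of_nonneg_left (exp_le_exp.2 (by nlinarith)) (by positivity)) (by positivity))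
  rw [enorm_eq_ofReal (rpow_nonneg hr0.le s), ENNReal.ofReal_rpow_of_nonneg
    (rpow_nonneg hr0.le s) hq.le, ← rpow_mul hr0.le, ← ENNReal.ofReal_mul (Δj_pos hr0).le]
  refine ENNReal.ofReal_le_ofReal ?_
  calc Δj α β r * r ^ (s * q) ≤ r ^ (2 * α + 1) * C * r ^ (s * q) := by gcongr
    _ = C * (r ^ (s * q) * r ^ (2 * α + 1)) := by ring
    _ = C * r ^ (s * q + (2 * α + 1)) := by rw [rpow_add hr0 (s * q) (2 * α + 1)]

theorem lintegral_μj_Ici_one_lt_top (h2α : 0 ≤ 2 * α + 1) (h2β : 0 ≤ 2 * β + 1) :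
    ∫⁻ t in Ici 1, ENNReal.ofReal (exp (-(α + β + 1) * t) * t⁻¹) ^ 2 ∂μj α β < ∞ := by
  have hint : IntegrableOn (fun t : ℝ => 2 ^ (2 * (α + β + 1)) * t ^ (-2 : ℝ)) (Ici 1) :=
    ((integrableOn_Ici_iff_integrableOn_Ioi).2
      (integrableOn_Ioi_rpow_of_lt (by norm_num : (-2 : ℝ) < -1) one_pos)).const_mul _
  rw [lintegral_μj_restrict measurableSet_Ici]
  refine lt_of_le_of_lt (setLIntegral_mono' measurableSet_Ici fun t (ht : 1 ≤ t) => ?_)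
    hint.lintegral_lt_top
  have ht0 : 0 < t := one_pos.trans_le ht
  have hΔ := Δj_le_rpow_mul (α := α) (β := β) h2α h2β ht0.le zero_le_one
    (by simpa using sinh_le_exp t)
  rw [← ENNReal.ofReal_pow (by positivity), ← ENNReal.ofReal_mul (Δj_pos ht0).le]
  refine ENNReal.ofReal_le_ofReal ?_
  calc Δj α β t * (exp (-(α + β + 1) * t) * t⁻¹) ^ 2
      ≤ 1 ^ (2 * α + 1) * (2 ^ (2 * (α + β + 1)) * exp (2 * (α + β + 1) * t)) *
          (exp (-(α + β + 1) * t) * t⁻¹) ^ 2 := by gcongr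
    _ = 2 ^ (2 * (α + β + 1)) * t ^ (-2 : ℝ) := by
        have hexp : exp (2 * (α + β + 1) * t) * exp (-(α + β + 1) * t) ^ 2 = 1 := by
          rw [← exp_nat_mul, ← exp_add]; push_cast; ring_nf; exact exp_zero
        rw [one_rpow, rpow_neg ht0.le, rpow_two, mul_pow, inv_pow]
        linear_combination (2 ^ (2 * (α + β + 1)) * (t ^ 2)⁻¹) * hexp

theorem lintegral_Δj_integral_sq_le {b c : ℝ} {s : Set ℝ} {a : ℝ → ℝ} (hs : MeasurableSet s)
    (ha : Measurable a) (K : ℝ → ℝ → ℂ) (f : ℝ → ℂ)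
    (hK : ∀ t ∈ s, ∀ r ∈ Ioc 0 b, ‖K t r‖ ≤ a t * r ^ c) :
    ∫⁻ t in s, ENNReal.ofReal
        (‖∫ r in Ioc 0 b, K t r * f r * ((Δj α β r : ℝ) : ℂ)‖ ^ 2 * Δj α β t) ≤
      (∫⁻ t in s, ENNReal.ofReal (a t) ^ 2 ∂μj α β) *
        eLpNorm ((fun r : ℝ => r ^ c) • f) 1 ((μj α β).restrict (Ioc 0 b)) ^ 2 := by
  have hK' : ∀ᵐ t ∂(μj α β).restrict s, ∀ᵐ r ∂volume.restrict (Ioc 0 b),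
      ‖K t r * f r * ((Δj α β r : ℝ) : ℂ)‖ₑ ≤
        ENNReal.ofReal (a t) * (ENNReal.ofReal (Δj α β r) * ‖((fun r : ℝ => r ^ c) • f) r‖ₑ) :=
    ae_restrict_of_forall_mem hs fun t ht =>
      ae_restrict_of_forall_mem measurableSet_Ioc fun r hr => by
        have hKr : ‖K t r‖ₑ ≤ ENNReal.ofReal (a t) * ‖r ^ c‖ₑ := by
          rw [enorm_eq_ofReal (rpow_nonneg hr.1.le c), ← ENNReal.ofReal_mul'
            (rpow_nonneg hr.1.le c), ← ofReal_norm]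
          exact ENNReal.ofReal_le_ofReal (hK t ht r hr)
        have hΔ : ‖((Δj α β r : ℝ) : ℂ)‖ₑ = ENNReal.ofReal (Δj α β r) := by
          rw [← ofReal_norm, Complex.norm_real, norm_of_nonneg (Δj_pos hr.1).le]
        rw [Pi.smul_apply', enorm_smul, enorm_mul, enorm_mul, hΔ]
        calc ‖K t r‖ₑ * ‖f r‖ₑ * ENNReal.ofReal (Δj α β r)
            ≤ ENNReal.ofReal (a t) * ‖r ^ c‖ₑ * ‖f r‖ₑ * ENNReal.ofReal (Δj α β r) := by gcongr
          _ = _ := by ring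
  calc _ = ∫⁻ t, ‖∫ r in Ioc 0 b, K t r * f r * ((Δj α β r : ℝ) : ℂ)‖ₑ ^ 2
        ∂(μj α β).restrict s := by
        rw [lintegral_μj_restrict hs]
        refine lintegral_congr fun t => ?_
        rw [ENNReal.ofReal_mul (by positivity), ENNReal.ofReal_pow (norm_nonneg _), ofReal_norm,
          mul_comm]
    _ ≤ _ := lintegral_enorm_integral_sq_le ha.aemeasurable hK'
    _ = _ := by rw [eLpNorm_one_eq_lintegral_enorm, lintegral_μj_restrict measurableSet_Ioc]

theorem rpow_lintegral_Δj_integral_sq_le {b c p q : ℝ} {s : Set ℝ} {a : ℝ → ℝ}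
    (hs : MeasurableSet s) (ha : Measurable a) (hpq : p.HolderConjugate q) (K : ℝ → ℝ → ℂ)
    (f : ℝ → ℂ) (hf : AEStronglyMeasurable f ((μj α β).restrict (Ioi 0)))
    (hK : ∀ t ∈ s, ∀ r ∈ Ioc 0 b, ‖K t r‖ ≤ a t * r ^ c) :
    (∫⁻ t in s, ENNReal.ofReal
        (‖∫ r in Ioc 0 b, K t r * f r * ((Δj α β r : ℝ) : ℂ)‖ ^ 2 * Δj α β t)) ^ (1 / 2 : ℝ) ≤
      (∫⁻ t in s, ENNReal.ofReal (a t) ^ 2 ∂μj α β) ^ (1 / 2 : ℝ) *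
        eLpNorm (fun r : ℝ => r ^ c) (ENNReal.ofReal q) ((μj α β).restrict (Ioc 0 b)) *
        eLpNorm f (ENNReal.ofReal p) ((μj α β).restrict (Ioi 0)) := by
  have := hpq.symm.ennrealOfReal
  have hle : (μj α β).restrict (Ioc 0 b) ≤ (μj α β).restrict (Ioi 0) :=
    Measure.restrict_mono Ioc_subset_Ioi_self le_rfl
  have hHolder : eLpNorm ((fun r : ℝ => r ^ c) • f) 1 ((μj α β).restrict (Ioc 0 b)) ≤
      eLpNorm (fun r : ℝ => r ^ c) (ENNReal.ofReal q) ((μj α β).restrict (Ioc 0 b)) *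
        eLpNorm f (ENNReal.ofReal p) ((μj α β).restrict (Ioi 0)) := by
    refine (eLpNorm_smul_le_mul_eLpNorm (p := ENNReal.ofReal q) (q := ENNReal.ofReal p)
      (hf.mono_measure hle) (measurable_id'.pow_const c).aestronglyMeasurable).trans ?_
    gcongr
  calc _ ≤ ((∫⁻ t in s, ENNReal.ofReal (a t) ^ 2 ∂μj α β) *
          eLpNorm ((fun r : ℝ => r ^ c) • f) 1 ((μj α β).restrict (Ioc 0 b)) ^ 2) ^ (1 / 2 : ℝ) :=
        ENNReal.rpow_le_rpow (lintegral_Δj_integral_sq_le hs ha K f hK) (by norm_num)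
    _ = (∫⁻ t in s, ENNReal.ofReal (a t) ^ 2 ∂μj α β) ^ (1 / 2 : ℝ) *
          eLpNorm ((fun r : ℝ => r ^ c) • f) 1 ((μj α β).restrict (Ioc 0 b)) := by
        rw [ENNReal.mul_rpow_of_nonneg _ _ (by norm_num), ← ENNReal.rpow_natCast,
          ← ENNReal.rpow_mul]
        norm_num
    _ ≤ _ := by
        rw [mul_assoc]
        gcongr

end JacobiWeight

theorem neg_one_lt_neg_mul_add_of_lt_div {α p q : ℝ} (h2α : 0 < 2 * α + 1)
    (hpq : p.HolderConjugate q) (hp : (4 * α + 4) / (2 * α + 3) < p) : -1 < -(α + 1 / 2) * q + (2 * α + 1) := by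
  have hp1 : 0 < p - 1 := by linarith [hpq.lt]
  have hp' : 4 * α + 4 < p * (2 * α + 3) := (div_lt_iff₀ (by linarith)).1 hp
  have hq : (α + 1 / 2) * q < 2 * α + 2 := by
    rw [← hpq.conjExponent_eq, Real.conjExponent, mul_div_assoc', div_lt_iff₀ hp1]
    linarith
  linarith

theorem stmt12 (α β : ℝ) (hβα : β < α) (hβ : -(1/2 : ℝ) < β)
    (p : ℝ) (hp : (4 * α + 4) / (2 * α + 3) < p) :
    ∃ C : ℝ, 0 < C ∧
      ∀ K : ℝ → ℝ → ℂ, Measurable (Function.uncurry K) →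
        (∀ t r : ℝ, 1 ≤ t → r ∈ Set.Ioc (0 : ℝ) (1/2) →
          ‖K t r‖ ≤ Real.exp (-(α + β + 1) * t) * t⁻¹ * r ^ (-(α + 1/2))) →
        ∀ f : ℝ → ℂ,
          MemLp f (ENNReal.ofReal p) ((μj α β).restrict (Set.Ioi 0)) →
          (∫⁻ t in Set.Ici (1 : ℝ),
              ENNReal.ofReal
                (‖∫ r in Set.Ioc (0 : ℝ) (1/2), K t r * f r * ((Δj α β r : ℝ) : ℂ)‖ ^ 2 *
                  Δj α β t)) ^ (1 / (2 : ℝ)) ≤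
            ENNReal.ofReal C *
              eLpNorm f (ENNReal.ofReal p) ((μj α β).restrict (Set.Ioi 0)) := by
  have h2α : 0 < 2 * α + 1 := by linarith
  have h2β : 0 ≤ 2 * β + 1 := by linarith
  have hpq : p.HolderConjugate p.conjExponent :=
    .conjExponent (lt_of_le_of_lt (by rw [le_div_iff₀ (by linarith)]; linarith) hp)
  have hw := memLp_rpow_μj_Ioc (β := β) (b := 1 / 2) h2α.le h2β hpq.symm.pos
    (neg_one_lt_neg_mul_add_of_lt_div h2α hpq hp)
  set W := eLpNorm (fun r : ℝ => r ^ (-(α + 1 / 2))) (ENNReal.ofReal p.conjExponent)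
    ((μj α β).restrict (Ioc 0 (1 / 2)))
  set B := ∫⁻ t in Ici 1, ENNReal.ofReal (exp (-(α + β + 1) * t) * t⁻¹) ^ 2 ∂μj α β
  have hBW : B ^ (1 / 2 : ℝ) * W ≠ ∞ := ENNReal.mul_ne_top
    (ENNReal.rpow_ne_top_of_nonneg (by norm_num) (lintegral_μj_Ici_one_lt_top h2α.le h2β).ne)
    hw.eLpNorm_ne_top
  refine ⟨(B ^ (1 / 2 : ℝ) * W).toReal + 1, by positivity, fun K _ hK f hf => ?_⟩
  calc _ ≤ B ^ (1 / 2 : ℝ) * W * eLpNorm f (ENNReal.ofReal p) ((μj α β).restrict (Ioi 0)) :=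
        rpow_lintegral_Δj_integral_sq_le measurableSet_Ici (by fun_prop) hpq K f hf.1
          fun t ht r hr => hK t r ht hr
    _ ≤ _ := by
        gcongr
        exact (ENNReal.le_ofReal_iff_toReal_le hBW (by positivity)).2 (by linarith)
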